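/- Fix a finite multiset M of positive integers with |M| ≥ 2. There exists a bijection ρ from 𝒯_M onto ℬ_M such that for every T ∈ 𝒯_M: sleaf(T) equals the number of right leaves of ρ(T); eleaf(T) equals the number of left leaves of ρ(T); yleaf(T) equals the number of nodes of ρ(T) having only a left child; yint(T) equals the number of nodes of ρ(T) having only a right child; suleaf(T) equals the number of right leaves of ρ(T) whose parent has a left child; snuleaf(T) equals the number of right leaves of ρ(T) whose parent has no left child; etleaf(T) equals the number of left leaves of ρ(T) whose parent has no right child; entleaf(T) equals the number of left leaves of ρ(T) whose parent has a right child; yerleaf(T) equals the number of nodes of ρ(T) having only a left child and whose left child has a left child; and syleaf(T) equals the number of nodes of ρ(T) having only a left child and whose left child has no left child. -/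

import Mathlib

/-- Labeled plane trees: a node with a label in `ℕ` and a (left-to-right ordered)
list of children. -/
inductive LTree : Type where
  | node : ℕ → List LTree → LTree

namespace LTree

/-- The label of the root. -/
def label : LTree → ℕ
  | node a _ => a

/-- The list of children of the root, from left to right. -/
def children : LTree → List LTree
  | node _ cs => cs

/-- A tree consisting of a single node is a leaf. -/
def isLeaf (t : LTree) : Bool := t.children.isEmpty

/-- The list of all subtrees (i.e. all nodes) of a tree. -/
def subtrees : LTree → List LTree
  | node a cs => node a cs :: (cs.attach.map (fun c => subtrees c.1)).flatten
decreasing_by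
  simp only [LTree.node.sizeOf_spec]
  have := List.sizeOf_lt_of_mem c.2
  omega

/-- The multiset of labels of all nodes of a tree. -/
def labels (T : LTree) : Multiset ℕ := (T.subtrees.map label : List ℕ)

/-- `T` is a weakly increasing tree on the multiset `M`: the root is labeled `0`,
the multiset of labels is `M ∪ {0}`, labels weakly increase along root-to-leaf paths,
and the labels of the children of each node weakly increase from right to left. -/
def IsWIT (M : Multiset ℕ) (T : LTree) : Prop :=
  T.label = 0 ∧ T.labels = 0 ::ₘ M ∧
  ∀ t ∈ T.subtrees, (∀ c ∈ t.children, t.label ≤ c.label) ∧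
    List.Chain' (fun a b => b ≤ a) (t.children.map label)

/-- `T` is (an encoding of) a plane tree with `n` edges: all labels are zero
and there are `n + 1` nodes. -/
def IsPlane (n : ℕ) (T : LTree) : Prop :=
  (∀ t ∈ T.subtrees, t.label = 0) ∧ T.subtrees.length = n + 1

/-- The number of singleton leaves: leaves that are the only child of their parent. -/
def sleaf (T : LTree) : ℕ :=
  T.subtrees.countP (fun t => match t.children with
    | [c] => c.isLeaf
    | _ => false)

/-- The number of elder leaves: leaves that are the leftmost child of their parent
and have siblings. -/
def eleaf (T : LTree) : ℕ :=
  T.subtrees.countP (fun t => match t.children with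
    | c :: _ :: _ => c.isLeaf
    | _ => false)

/-- The number of young leaves: leaves that are not the leftmost child of their parent. -/
def yleaf (T : LTree) : ℕ :=
  (T.subtrees.map (fun t => t.children.tail.countP isLeaf)).sum

/-- The number of young internal nodes: internal nodes whose leftmost child is internal. -/
def yint (T : LTree) : ℕ :=
  T.subtrees.countP (fun t => match t.children with
    | c :: _ => !c.isLeaf
    | _ => false)

/-- The number of singleton internal nodes: parents of a singleton leaf. -/
def sint (T : LTree) : ℕ :=
  T.subtrees.countP (fun t => match t.children with
    | [c] => c.isLeaf
    | _ => false)

/-- The number of elder internal nodes: parents of an elder leaf. -/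
def eint (T : LTree) : ℕ :=
  T.subtrees.countP (fun t => match t.children with
    | c :: _ :: _ => c.isLeaf
    | _ => false)

/-- The number of old leaves: leaves that are the leftmost child of their parent. -/
def oleaf (T : LTree) : ℕ := sleaf T + eleaf T

/-- The number of old internal nodes. -/
def oint (T : LTree) : ℕ := sint T + eint T

/-- Whether the root of `t` is the parent of a singleton leaf. -/
def isSingletonParent (t : LTree) : Bool :=
  match t.children with
  | [c] => c.isLeaf
  | _ => false

/-- The number of singleton leaves with uncle: singleton leaves whose parent has an
elder sibling (a sibling to its left). -/
def suleaf (T : LTree) : ℕ :=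
  (T.subtrees.map (fun g => g.children.tail.countP isSingletonParent)).sum

/-- The number of singleton leaves with no uncle: singleton leaves whose parent has no
elder sibling (the parent is the root or a leftmost child). -/
def snuleaf (T : LTree) : ℕ :=
  (if T.isSingletonParent then 1 else 0) +
    (T.subtrees.map (fun g => match g.children with
      | c :: _ => if c.isSingletonParent then 1 else 0
      | [] => 0)).sum

/-- The number of elder twin leaves: elder leaves such that the second child of their
parent is also a leaf. -/
def etleaf (T : LTree) : ℕ :=
  T.subtrees.countP (fun t => match t.children with
    | c :: d :: _ => c.isLeaf && d.isLeaf
    | _ => false)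

/-- The number of elder non-twin leaves: elder leaves such that the second child of
their parent is not a leaf. -/
def entleaf (T : LTree) : ℕ :=
  T.subtrees.countP (fun t => match t.children with
    | c :: d :: _ => c.isLeaf && !d.isLeaf
    | _ => false)

/-- The number of second leaves: young leaves that are the second child of their parent. -/
def syleaf (T : LTree) : ℕ :=
  T.subtrees.countP (fun t => match t.children with
    | _ :: d :: _ => d.isLeaf
    | _ => false)

/-- The number of younger leaves: young leaves that are not the second child of their
parent. -/
def yerleaf (T : LTree) : ℕ :=
  (T.subtrees.map (fun t => (t.children.drop 2).countP isLeaf)).sum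

end LTree

/-- Labeled binary trees with labels in `ℕ`. -/
inductive LBT : Type where
  | nil : LBT
  | node : ℕ → LBT → LBT → LBT

namespace LBT

/-- The list of all subtrees rooted at actual nodes. -/
def subtrees : LBT → List LBT
  | nil => []
  | node a l r => node a l r :: (l.subtrees ++ r.subtrees)

/-- The label of the root (`0` for the empty tree). -/
def labelOf : LBT → ℕ
  | nil => 0
  | node a _ _ => a

/-- The left subtree. -/
def left : LBT → LBT
  | nil => nil
  | node _ l _ => l

/-- The right subtree. -/
def right : LBT → LBT
  | nil => nil
  | node _ _ r => r

/-- Whether the tree is empty. -/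
def isNil : LBT → Bool
  | nil => true
  | node _ _ _ => false

/-- Whether the tree is a single node (a leaf). -/
def isLeafB : LBT → Bool
  | node _ nil nil => true
  | _ => false

/-- The multiset of labels of all nodes. -/
def labels (B : LBT) : Multiset ℕ := (B.subtrees.map labelOf : List ℕ)

/-- `B` is a weakly increasing binary tree on the multiset `M`: the labels form the
multiset `M` and labels weakly increase along every path from the root. -/
def IsWIBT (M : Multiset ℕ) (B : LBT) : Prop :=
  B.labels = M ∧ ∀ t ∈ B.subtrees,
    (t.left ≠ nil → t.labelOf ≤ t.left.labelOf) ∧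
    (t.right ≠ nil → t.labelOf ≤ t.right.labelOf)

/-- The number of right leaves. -/
def rightLeafCount (B : LBT) : ℕ := B.subtrees.countP (fun t => isLeafB t.right)

/-- The number of left leaves. -/
def leftLeafCount (B : LBT) : ℕ := B.subtrees.countP (fun t => isLeafB t.left)

/-- The number of nodes having only a left child. -/
def onlyLeftCount (B : LBT) : ℕ :=
  B.subtrees.countP (fun t => !t.left.isNil && t.right.isNil)

/-- The number of nodes having only a right child. -/
def onlyRightCount (B : LBT) : ℕ :=
  B.subtrees.countP (fun t => t.left.isNil && !t.right.isNil)

/-- The number of right leaves whose parent has a left child. -/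
def rightLeafWithLeftCount (B : LBT) : ℕ :=
  B.subtrees.countP (fun t => isLeafB t.right && !t.left.isNil)

/-- The number of right leaves whose parent has no left child. -/
def rightLeafNoLeftCount (B : LBT) : ℕ :=
  B.subtrees.countP (fun t => isLeafB t.right && t.left.isNil)

/-- The number of left leaves whose parent has no right child. -/
def leftLeafNoRightCount (B : LBT) : ℕ :=
  B.subtrees.countP (fun t => isLeafB t.left && t.right.isNil)

/-- The number of left leaves whose parent has a right child. -/
def leftLeafWithRightCount (B : LBT) : ℕ :=
  B.subtrees.countP (fun t => isLeafB t.left && !t.right.isNil)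

/-- The number of nodes having only a left child, whose left child has a left child. -/
def onlyLeftGrandCount (B : LBT) : ℕ :=
  B.subtrees.countP (fun t => !t.left.isNil && t.right.isNil && !t.left.left.isNil)

/-- The number of nodes having only a left child, whose left child has no left child. -/
def onlyLeftNoGrandCount (B : LBT) : ℕ :=
  B.subtrees.countP (fun t => !t.left.isNil && t.right.isNil && t.left.left.isNil)

end LBT


/-!
Under `ρ`, a non-root node `u` of `T` becomes a binary node whose right subtree encodes the
children of `u` and whose left subtree encodes the siblings to the left of `u`. So the children
of `u` are exactly the left spine of the right subtree of `u`, and a count of binary nodes by a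
local condition splits into a sum, over the nodes `u` of `T`, of a count along the spine of the
children of `u`. On that spine "no left child" means "leftmost child", "left child a leaf" means
"second child whose elder sibling is a leaf", "no left grandchild" means "first or second child",
and "no right child" / "right child a leaf" mean "leaf" / "parent of a singleton leaf". Each tree
statistic is the same per-node count, except that `sleaf` and `snuleaf` also see the root, which
is not the parent of a singleton leaf once `|M| ≥ 2`. Weak increase transfers the same way:
labels decreasing from left to right among siblings become labels increasing along left edges.
-/

theorem List.countP_eq_sum_map_ite {α : Type*} (p : α → Bool) (l : List α) :
    l.countP p = (l.map fun x => if p x then 1 else 0).sum := by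
  induction l with
  | nil => rfl
  | cons x l ih => cases h : p x <;> simp [h, ih, Nat.add_comm]

theorem List.IsChain.forall_le_iff_getLast? {α : Type*} [Preorder α] {l : List α}
    (h : l.IsChain (fun a b => b ≤ a)) {a : α} :
    (∀ x ∈ l, a ≤ x) ↔ ∀ x ∈ l.getLast?, a ≤ x := by
  refine ⟨fun hl x hx => hl x (List.mem_of_getLast? hx), fun hlast => ?_⟩
  induction l using List.reverseRecOn with
  | nil => simp
  | append_singleton l y =>
    have hy : a ≤ y := hlast y (by simp)
    have hpw := List.pairwise_append.mp (List.isChain_iff_pairwise.mp h)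
    intro x hx
    rcases List.mem_append.mp hx with hx | hx
    · exact hy.trans (hpw.2.2 x hx y (by simp))
    · simp_all

namespace LBT

@[simp] theorem left_node (a : ℕ) (l r : LBT) : (node a l r).left = l := rfl

@[simp] theorem right_node (a : ℕ) (l r : LBT) : (node a l r).right = r := rfl

@[simp] theorem isNil_nil : nil.isNil = true := rfl

@[simp] theorem isNil_node (a : ℕ) (l r : LBT) : (node a l r).isNil = false := rfl

@[simp] theorem isLeafB_nil : nil.isLeafB = false := rfl

@[simp] theorem isLeafB_node (a : ℕ) (l r : LBT) :
    (node a l r).isLeafB = (l.isNil && r.isNil) := by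
  cases l <;> cases r <;> rfl

theorem isLeafB_eq (B : LBT) : B.isLeafB = (!B.isNil && B.left.isNil && B.right.isNil) := by
  rcases B with _ | ⟨a, _ | _, _ | _⟩ <;> rfl

@[simp] theorem labels_node (a : ℕ) (l r : LBT) :
    (node a l r).labels = a ::ₘ (l.labels + r.labels) := by
  simp [labels, subtrees, labelOf]

def leftSpine : LBT → List LBT
  | nil => []
  | node a l r => node a l r :: l.leftSpine

def ChildrenOrdered (t : LBT) : Prop :=
  (t.left ≠ nil → t.labelOf ≤ t.left.labelOf) ∧ (t.right ≠ nil → t.labelOf ≤ t.right.labelOf)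

theorem childrenOrdered_node {a : ℕ} {l r : LBT} :
    (node a l r).ChildrenOrdered ↔ (l ≠ nil → a ≤ l.labelOf) ∧ (r ≠ nil → a ≤ r.labelOf) :=
  Iff.rfl

end LBT

namespace LTree

theorem induction_on {P : LTree → Prop} (t : LTree)
    (node : ∀ a cs, (∀ c ∈ cs, P c) → P (node a cs)) : P t :=
  match t with
  | .node a cs => node a cs fun c _ => induction_on c node

theorem forest_induction {P : List LTree → Prop} (nil : P [])
    (snoc : ∀ cs t, P cs → P t.children → P (cs ++ [t])) (cs : List LTree) : P cs := by
  have of_children : ∀ l : List LTree, (∀ c ∈ l, P c.children) → P l := by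
    intro l
    induction l using List.reverseRecOn with
    | nil => exact fun _ => nil
    | append_singleton l c ih =>
      intro h
      exact snoc l c (ih fun x hx => h x (by simp [hx])) (h c (by simp))
  exact of_children cs fun c _ => c.induction_on fun _ ds ih => of_children ds ih

@[simp] theorem label_node (a : ℕ) (cs : List LTree) : (node a cs).label = a := rfl

@[simp] theorem children_node (a : ℕ) (cs : List LTree) : (node a cs).children = cs := rfl

@[simp] theorem subtrees_node (a : ℕ) (cs : List LTree) :
    (node a cs).subtrees = node a cs :: (cs.map subtrees).flatten := by
  rw [subtrees]; simp

@[simp] theorem labels_node (a : ℕ) (cs : List LTree) :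
    (node a cs).labels = a ::ₘ (cs.map labels).sum := by
  simp only [labels, subtrees_node, List.map_cons, List.map_flatten, List.map_map]
  rw [← Multiset.cons_coe]
  congr 1
  induction cs with
  | nil => rfl
  | cons c cs ih => rw [List.map_cons, List.flatten_cons, ← Multiset.coe_add, ih]; rfl

theorem forall_mem_subtrees_node {p : LTree → Prop} {a : ℕ} {cs : List LTree} :
    (∀ s ∈ (node a cs).subtrees, p s) ↔ p (node a cs) ∧ ∀ c ∈ cs, ∀ s ∈ c.subtrees, p s := by
  simp only [subtrees_node, List.forall_mem_cons, List.mem_flatten, List.mem_map]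
  aesop

theorem sum_map_subtrees (g : LTree → ℕ) (t : LTree) :
    (t.subtrees.map g).sum = g t + (t.children.map fun c => (c.subtrees.map g).sum).sum := by
  cases t
  simp [List.sum_flatten, Function.comp_def]

/-- Every node but the root is a child of exactly one node. -/
theorem countP_subtrees (p : LTree → Bool) (T : LTree) :
    T.subtrees.countP p =
      (if p T then 1 else 0) + (T.subtrees.map fun s => s.children.countP p).sum := by
  induction T using induction_on with
  | node a cs ih =>
    rw [sum_map_subtrees, subtrees_node, List.countP_cons, List.countP_flatten, List.map_map,
      Function.comp_def, List.map_congr_left ih, List.sum_map_add, children_node,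
      List.countP_eq_sum_map_ite p cs]
    omega

def ChildrenOrdered (t : LTree) : Prop :=
  (∀ c ∈ t.children, t.label ≤ c.label) ∧ (t.children.map label).IsChain (fun a b => b ≤ a)

theorem childrenOrdered_node {a : ℕ} {cs : List LTree} :
    (node a cs).ChildrenOrdered ↔
      (∀ c ∈ cs, a ≤ c.label) ∧ (cs.map label).IsChain (fun a b => b ≤ a) := Iff.rfl

/-- `toLBTOnto cs B` stacks the trees of the forest `cs`, from left to right, onto `B` along the
left spine: the root of `toLBT (cs ++ [t])` is the rightmost tree `t`, its left subtree encodes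
the elder siblings `cs` of `t` and its right subtree the children of `t`. -/
def toLBTOnto : List LTree → LBT → LBT
  | [], B => B
  | node a ds :: cs, B => toLBTOnto cs (.node a B (toLBTOnto ds .nil))

def toLBT (cs : List LTree) : LBT := toLBTOnto cs .nil

theorem toLBTOnto_append_singleton (cs : List LTree) (t : LTree) (B : LBT) :
    toLBTOnto (cs ++ [t]) B = .node t.label (toLBTOnto cs B) (toLBT t.children) := by
  induction cs generalizing B with
  | nil => cases t; simp [toLBTOnto, toLBT]
  | cons c cs ih => cases c; simp [toLBTOnto, ih]

@[simp] theorem toLBT_nil : toLBT [] = .nil := by simp [toLBT, toLBTOnto]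

@[simp] theorem toLBT_append_singleton (cs : List LTree) (t : LTree) :
    toLBT (cs ++ [t]) = .node t.label (toLBT cs) (toLBT t.children) :=
  toLBTOnto_append_singleton cs t .nil

@[simp] theorem toLBT_singleton (t : LTree) :
    toLBT [t] = .node t.label .nil (toLBT t.children) := by
  simpa using toLBT_append_singleton [] t

@[simp] theorem isNil_toLBT (cs : List LTree) : (toLBT cs).isNil = cs.isEmpty := by
  induction cs using List.reverseRecOn <;> simp

@[simp] theorem left_toLBT (cs : List LTree) : (toLBT cs).left = toLBT cs.dropLast := by
  induction cs using List.reverseRecOn <;> simp [LBT.left]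

@[simp] theorem isLeafB_toLBT_cons_cons (c d : LTree) (cs : List LTree) :
    (toLBT (c :: d :: cs)).isLeafB = false := by
  simp [LBT.isLeafB_eq]

@[simp] theorem isLeafB_toLBT_children (t : LTree) :
    (toLBT t.children).isLeafB = t.isSingletonParent := by
  obtain ⟨a, _ | ⟨c, _ | ⟨d, cs⟩⟩⟩ := t <;> simp [isSingletonParent, isLeaf]

theorem leftSpine_toLBT_append_singleton (cs : List LTree) (t : LTree) :
    (toLBT (cs ++ [t])).leftSpine =
      .node t.label (toLBT cs) (toLBT t.children) :: (toLBT cs).leftSpine := by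
  rw [toLBT_append_singleton, LBT.leftSpine]

theorem labels_toLBT (cs : List LTree) : (toLBT cs).labels = (cs.map labels).sum := by
  induction cs using forest_induction with
  | nil => simp [LBT.labels, LBT.subtrees]
  | snoc cs t ihcs iht => cases t; simp_all

end LTree

namespace LBT

def toForest : LBT → List LTree
  | nil => []
  | node a l r => l.toForest ++ [.node a r.toForest]

@[simp] theorem toLBT_toForest (B : LBT) : LTree.toLBT B.toForest = B := by
  induction B with
  | nil => simp [toForest]
  | node a l r ihl ihr => simp [toForest, ihl, ihr]

end LBT

namespace LTree

@[simp] theorem toForest_toLBT (cs : List LTree) : (toLBT cs).toForest = cs := by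
  induction cs using forest_induction with
  | nil => simp [LBT.toForest]
  | snoc cs t ihcs iht => cases t; simp_all [LBT.toForest]

theorem toLBT_ne_nil_imp_le_iff {a : ℕ} {cs : List LTree} :
    (toLBT cs ≠ .nil → a ≤ (toLBT cs).labelOf) ↔ ∀ x ∈ (cs.map label).getLast?, a ≤ x := by
  induction cs using List.reverseRecOn <;> simp [LBT.labelOf]

theorem childrenOrdered_toLBT_iff (cs : List LTree) :
    (∀ n ∈ (toLBT cs).subtrees, n.ChildrenOrdered) ↔
      (∀ t ∈ cs, ∀ s ∈ t.subtrees, s.ChildrenOrdered) ∧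
        (cs.map label).IsChain (fun a b => b ≤ a) := by
  induction cs using forest_induction with
  | nil => simp [LBT.subtrees]
  | snoc cs t ihcs iht =>
    obtain ⟨a, ds⟩ := t
    rw [toLBT_append_singleton]
    simp only [children_node, label_node] at iht ⊢
    simp only [LBT.subtrees, List.forall_mem_cons, List.forall_mem_append, ihcs, iht,
      List.mem_singleton, forall_eq, forall_mem_subtrees_node, List.map_append,
      List.isChain_append, LBT.childrenOrdered_node, childrenOrdered_node,
      toLBT_ne_nil_imp_le_iff, List.map_cons, List.map_nil, List.isChain_singleton,
      List.head?_cons, Option.mem_def, Option.some.injEq, forall_eq', true_and]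
    rw [← List.forall_mem_map (f := label) (P := (a ≤ ·))]
    by_cases hds : (ds.map label).IsChain (fun a b => b ≤ a)
    · rw [hds.forall_le_iff_getLast?]
      tauto
    · tauto

theorem isWIT_node_zero_iff {M : Multiset ℕ} {cs : List LTree} :
    IsWIT M (node 0 cs) ↔ LBT.IsWIBT M (toLBT cs) := by
  change _ ∧ _ ∧ (∀ s ∈ (node 0 cs).subtrees, s.ChildrenOrdered) ↔
    _ ∧ ∀ n ∈ (toLBT cs).subtrees, n.ChildrenOrdered
  rw [childrenOrdered_toLBT_iff, forall_mem_subtrees_node, childrenOrdered_node, labels_node,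
    labels_toLBT, Multiset.cons_inj_right]
  simp only [label_node, zero_le, implies_true, true_and]
  tauto

theorem eq_node_zero_of_isWIT {M : Multiset ℕ} {T : LTree} (h : IsWIT M T) :
    T = node 0 T.children := by
  obtain ⟨a, cs⟩ := T
  obtain rfl : a = 0 := h.1
  rfl

theorem isSingletonParent_eq_false_of_isWIT {M : Multiset ℕ} {T : LTree} (hT : T.IsWIT M)
    (hM : 2 ≤ Multiset.card M) : T.isSingletonParent = false := by
  obtain ⟨a, _ | ⟨⟨b, _ | ⟨d, ds⟩⟩, _ | ⟨c, cs⟩⟩⟩ := T <;> try rfl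
  have := congrArg Multiset.card hT.2.1
  simp at this
  omega

theorem countP_subtrees_toLBT (q : LBT → Bool) (T : LTree) :
    (toLBT T.children).subtrees.countP q =
      (T.subtrees.map fun s => (toLBT s.children).leftSpine.countP q).sum := by
  suffices h : ∀ cs : List LTree, (toLBT cs).subtrees.countP q =
      (toLBT cs).leftSpine.countP q +
        (cs.map fun t => (t.subtrees.map fun s => (toLBT s.children).leftSpine.countP q).sum).sum by
    rw [h, sum_map_subtrees]
  intro cs
  induction cs using forest_induction with
  | nil => simp [LBT.subtrees, LBT.leftSpine]
  | snoc cs t ihcs iht =>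
    simp only [toLBT_append_singleton, LBT.subtrees, LBT.leftSpine, List.countP_cons,
      List.countP_append, ihcs, iht, List.map_append, List.sum_append, List.map_cons,
      List.map_nil, List.sum_cons, List.sum_nil, sum_map_subtrees _ t]
    omega

theorem sum_subtrees_eq_countP_toLBT (q : LBT → Bool) (f : List LTree → ℕ) (nil : f [] = 0)
    (append_singleton : ∀ cs t, f (cs ++ [t]) =
      f cs + if q (.node t.label (toLBT cs) (toLBT t.children)) then 1 else 0)
    (T : LTree) :
    (T.subtrees.map fun s => f s.children).sum = (toLBT T.children).subtrees.countP q := by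
  have spine : ∀ cs, (toLBT cs).leftSpine.countP q = f cs := by
    intro cs
    induction cs using List.reverseRecOn with
    | nil => simp [LBT.leftSpine, nil]
    | append_singleton cs t ih =>
      rw [leftSpine_toLBT_append_singleton, List.countP_cons, ih, append_singleton]
  simp only [countP_subtrees_toLBT, spine]

theorem sleaf_eq_rightLeafCount (T : LTree) :
    T.sleaf = (if T.isSingletonParent then 1 else 0) + (toLBT T.children).rightLeafCount := by
  rw [show T.sleaf = T.subtrees.countP isSingletonParent from rfl, countP_subtrees]
  congr 1
  refine sum_subtrees_eq_countP_toLBT _ (·.countP isSingletonParent) rfl (fun cs t => ?_) T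
  simp

theorem eleaf_eq_leftLeafCount (T : LTree) : T.eleaf = (toLBT T.children).leftLeafCount := by
  rw [eleaf, List.countP_eq_sum_map_ite]
  refine sum_subtrees_eq_countP_toLBT _
    (fun cs => if (match cs with | c :: _ :: _ => c.isLeaf | _ => false) then 1 else 0)
    (by simp) (fun cs t => ?_) T
  rcases cs with _ | ⟨c, _ | ⟨d, cs⟩⟩ <;> simp [isLeaf]

theorem yleaf_eq_onlyLeftCount (T : LTree) : T.yleaf = (toLBT T.children).onlyLeftCount := by
  rw [yleaf]
  refine sum_subtrees_eq_countP_toLBT _ (fun cs => cs.tail.countP isLeaf)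
    (by simp) (fun cs t => ?_) T
  rcases cs with _ | ⟨c, cs⟩ <;> simp [isLeaf, List.countP_cons]

theorem yint_eq_onlyRightCount (T : LTree) : T.yint = (toLBT T.children).onlyRightCount := by
  rw [yint, List.countP_eq_sum_map_ite]
  refine sum_subtrees_eq_countP_toLBT _
    (fun cs => if (match cs with | c :: _ => !c.isLeaf | _ => false) then 1 else 0)
    (by simp) (fun cs t => ?_) T
  rcases cs with _ | ⟨c, _ | ⟨d, cs⟩⟩ <;> simp [isLeaf]

theorem suleaf_eq_rightLeafWithLeftCount (T : LTree) :
    T.suleaf = (toLBT T.children).rightLeafWithLeftCount := by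
  rw [suleaf]
  refine sum_subtrees_eq_countP_toLBT _ (fun cs => cs.tail.countP isSingletonParent)
    (by simp) (fun cs t => ?_) T
  rcases cs with _ | ⟨c, cs⟩ <;> simp [List.countP_cons]

theorem etleaf_eq_leftLeafNoRightCount (T : LTree) :
    T.etleaf = (toLBT T.children).leftLeafNoRightCount := by
  rw [etleaf, List.countP_eq_sum_map_ite]
  refine sum_subtrees_eq_countP_toLBT _
    (fun cs => if (match cs with | c :: d :: _ => c.isLeaf && d.isLeaf | _ => false) then 1 else 0)
    (by simp) (fun cs t => ?_) T
  rcases cs with _ | ⟨c, _ | ⟨d, cs⟩⟩ <;> simp [isLeaf]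

theorem entleaf_eq_leftLeafWithRightCount (T : LTree) :
    T.entleaf = (toLBT T.children).leftLeafWithRightCount := by
  rw [entleaf, List.countP_eq_sum_map_ite]
  refine sum_subtrees_eq_countP_toLBT _
    (fun cs => if (match cs with | c :: d :: _ => c.isLeaf && !d.isLeaf | _ => false) then 1 else 0)
    (by simp) (fun cs t => ?_) T
  rcases cs with _ | ⟨c, _ | ⟨d, cs⟩⟩ <;> simp [isLeaf]

theorem yerleaf_eq_onlyLeftGrandCount (T : LTree) :
    T.yerleaf = (toLBT T.children).onlyLeftGrandCount := by
  rw [yerleaf]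
  refine sum_subtrees_eq_countP_toLBT _ (fun cs => (cs.drop 2).countP isLeaf)
    (by simp) (fun cs t => ?_) T
  rcases cs with _ | ⟨c, _ | ⟨d, cs⟩⟩ <;> simp [isLeaf]

theorem syleaf_eq_onlyLeftNoGrandCount (T : LTree) :
    T.syleaf = (toLBT T.children).onlyLeftNoGrandCount := by
  rw [syleaf, List.countP_eq_sum_map_ite]
  refine sum_subtrees_eq_countP_toLBT _
    (fun cs => if (match cs with | _ :: d :: _ => d.isLeaf | _ => false) then 1 else 0)
    (by simp) (fun cs t => ?_) T
  rcases cs with _ | ⟨c, _ | ⟨d, cs⟩⟩ <;> simp [isLeaf]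

theorem snuleaf_eq_rightLeafNoLeftCount (T : LTree) :
    T.snuleaf =
      (if T.isSingletonParent then 1 else 0) + (toLBT T.children).rightLeafNoLeftCount := by
  rw [snuleaf]
  congr 1
  refine sum_subtrees_eq_countP_toLBT _
    (fun cs => match cs with | c :: _ => if c.isSingletonParent then 1 else 0 | [] => 0)
    (by simp) (fun cs t => ?_) T
  rcases cs with _ | ⟨c, _ | ⟨d, cs⟩⟩ <;> simp

end LTree

def rhoEquiv (M : Multiset ℕ) : {T : LTree // T.IsWIT M} ≃ {B : LBT // B.IsWIBT M} where
  toFun T := ⟨LTree.toLBT T.1.children, by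
    rw [← LTree.isWIT_node_zero_iff, ← LTree.eq_node_zero_of_isWIT T.2]; exact T.2⟩
  invFun B := ⟨.node 0 B.1.toForest, by
    rw [LTree.isWIT_node_zero_iff, LBT.toLBT_toForest]; exact B.2⟩
  left_inv T := Subtype.ext <| by
    simpa only [LTree.toForest_toLBT] using (LTree.eq_node_zero_of_isWIT T.2).symm
  right_inv B := Subtype.ext <| by simp

theorem rhoEquiv_apply_coe (M : Multiset ℕ) (T : {T : LTree // T.IsWIT M}) :
    (rhoEquiv M T).1 = LTree.toLBT T.1.children := rfl

theorem rho_bijection_statistics_general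
    (M : Multiset ℕ) (hcard : 2 ≤ Multiset.card M) :
    ∃ ρ : {T : LTree // LTree.IsWIT M T} → {B : LBT // LBT.IsWIBT M B},
      Function.Bijective ρ ∧
        ∀ T : {T : LTree // LTree.IsWIT M T},
          LTree.sleaf T.1 = LBT.rightLeafCount (ρ T).1 ∧
          LTree.eleaf T.1 = LBT.leftLeafCount (ρ T).1 ∧
          LTree.yleaf T.1 = LBT.onlyLeftCount (ρ T).1 ∧
          LTree.yint T.1 = LBT.onlyRightCount (ρ T).1 ∧
          LTree.suleaf T.1 = LBT.rightLeafWithLeftCount (ρ T).1 ∧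
          LTree.snuleaf T.1 = LBT.rightLeafNoLeftCount (ρ T).1 ∧
          LTree.etleaf T.1 = LBT.leftLeafNoRightCount (ρ T).1 ∧
          LTree.entleaf T.1 = LBT.leftLeafWithRightCount (ρ T).1 ∧
          LTree.yerleaf T.1 = LBT.onlyLeftGrandCount (ρ T).1 ∧
          LTree.syleaf T.1 = LBT.onlyLeftNoGrandCount (ρ T).1 := by
  refine ⟨rhoEquiv M, (rhoEquiv M).bijective, fun ⟨T, hT⟩ => ?_⟩
  have hroot := LTree.isSingletonParent_eq_false_of_isWIT hT hcard
  rw [rhoEquiv_apply_coe]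
  open LTree in
  exact ⟨by simpa [hroot] using sleaf_eq_rightLeafCount T, eleaf_eq_leftLeafCount T,
    yleaf_eq_onlyLeftCount T, yint_eq_onlyRightCount T, suleaf_eq_rightLeafWithLeftCount T,
    by simpa [hroot] using snuleaf_eq_rightLeafNoLeftCount T, etleaf_eq_leftLeafNoRightCount T,
    entleaf_eq_leftLeafWithRightCount T, yerleaf_eq_onlyLeftGrandCount T,
    syleaf_eq_onlyLeftNoGrandCount T⟩

/-- **Theorem (the bijection `ρ` and its statistics).**  For a multiset `M` of positive
integers with `|M| ≥ 2` there is a bijection `ρ` from the weakly increasing trees on `M`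
onto the weakly increasing binary trees on `M` translating the ten statistics as stated. -/
theorem rho_bijection_statistics
    (M : Multiset ℕ) (hM : ∀ x ∈ M, 0 < x) (hcard : 2 ≤ Multiset.card M) :
    ∃ ρ : {T : LTree // LTree.IsWIT M T} → {B : LBT // LBT.IsWIBT M B},
      Function.Bijective ρ ∧
        ∀ T : {T : LTree // LTree.IsWIT M T},
          LTree.sleaf T.1 = LBT.rightLeafCount (ρ T).1 ∧
          LTree.eleaf T.1 = LBT.leftLeafCount (ρ T).1 ∧
          LTree.yleaf T.1 = LBT.onlyLeftCount (ρ T).1 ∧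
          LTree.yint T.1 = LBT.onlyRightCount (ρ T).1 ∧
          LTree.suleaf T.1 = LBT.rightLeafWithLeftCount (ρ T).1 ∧
          LTree.snuleaf T.1 = LBT.rightLeafNoLeftCount (ρ T).1 ∧
          LTree.etleaf T.1 = LBT.leftLeafNoRightCount (ρ T).1 ∧
          LTree.entleaf T.1 = LBT.leftLeafWithRightCount (ρ T).1 ∧
          LTree.yerleaf T.1 = LBT.onlyLeftGrandCount (ρ T).1 ∧
          LTree.syleaf T.1 = LBT.onlyLeftNoGrandCount (ρ T).1 :=
  rho_bijection_statistics_general M hcard
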